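/- arXiv:1503.02791 — 4 statements merged into one kernel-verified Lean document; each statement's English description precedes it below -/
import Mathlib

section
/- For every integer n ≥ 2 and every real m with 0 < m < 1/2, the set E_{2m} is not a convex subset of ℂ^n. -/
/-!
Restricted to the real plane `{(x, y e_i)}`, `E_{2m}` becomes `{|x|^α + y² < 1}` with `α = 2m ∈ (0, 1)`.
Since `α < 1`, there is a small `μ > 0` with `μ^α ≥ 4μ`. Take `P = (a, 0)` and `Q = (0, b)` in this set with
`a^α = b² = 1 - μ`. Then `μ P + (1 - μ) Q` gives `(1 - μ)(μ^α + (1 - μ)²) ≥ (1 - μ)(1 + μ)² ≥ 1`, so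
it lies outside the set.
-/

noncomputable section

/-- The pseudo-egg `E_{2m} ⊆ ℂ^n` with `n = k + 1`, written as `ℂ × ℂ^k`:
`{ z : |z₁|^{2m} + |z₂|² + … + |z_n|² < 1 }`. -/
def E2m (k : ℕ) (m : ℝ) : Set (ℂ × (Fin k → ℂ)) :=
  {z | ‖z.1‖ ^ (2 * m) + ∑ j, ‖z.2 j‖ ^ 2 < 1}

open Real

lemma exists_four_mul_le_rpow {α : ℝ} (hα0 : 0 ≤ α) (hα1 : α < 1) :
    ∃ μ : ℝ, 0 < μ ∧ μ ≤ 1 / 2 ∧ 4 * μ ≤ μ ^ α := by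
  set μ : ℝ := (1 / 4) ^ (1 - α)⁻¹
  have hμ0 : 0 < μ := by positivity
  have hμα : μ ^ (1 - α) = 1 / 4 := rpow_inv_rpow (by norm_num) (by linarith)
  refine ⟨μ, hμ0, ?_, ?_⟩
  · calc μ ≤ (1 / 4) ^ (1 : ℝ) :=
          rpow_le_rpow_of_exponent_ge (by norm_num) (by norm_num)
            ((one_le_inv₀ (by linarith)).mpr (by linarith))
      _ ≤ 1 / 2 := by norm_num
  · have : μ ^ α = μ / μ ^ (1 - α) := by
      rw [rpow_sub hμ0, rpow_one, div_div_cancel₀ hμ0.ne']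
    rw [this, hμα]
    linarith

theorem not_convex_setOf_abs_rpow_add_sq_lt_one {α : ℝ} (hα0 : 0 < α) (hα1 : α < 1) :
    ¬ Convex ℝ {p : ℝ × ℝ | |p.1| ^ α + p.2 ^ 2 < 1} := by
  intro hconv
  obtain ⟨μ, hμ0, hμ, hμα⟩ := exists_four_mul_le_rpow hα0.le hα1
  set a := (1 - μ) ^ α⁻¹
  have ha0 : 0 ≤ a := rpow_nonneg (by linarith) _
  have ha : a ^ α = 1 - μ := rpow_inv_rpow (by linarith) hα0.ne'
  have hP : (a, (0 : ℝ)) ∈ {p : ℝ × ℝ | |p.1| ^ α + p.2 ^ 2 < 1} := by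
    simp only [Set.mem_ofPred_eq, abs_of_nonneg ha0, ha]
    linarith
  have hQ : ((0 : ℝ), √(1 - μ)) ∈ {p : ℝ × ℝ | |p.1| ^ α + p.2 ^ 2 < 1} := by
    simp only [Set.mem_ofPred_eq, abs_zero, zero_rpow hα0.ne', sq_sqrt (by linarith : 0 ≤ 1 - μ)]
    linarith
  have hmix := hconv hP hQ hμ0.le (by linarith) (add_sub_cancel μ 1)
  simp only [Prod.smul_mk, Prod.mk_add_mk, smul_eq_mul, mul_zero, add_zero, zero_add,
    Set.mem_ofPred_eq, abs_of_nonneg (mul_nonneg hμ0.le ha0), mul_rpow hμ0.le ha0, ha, mul_pow,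
    sq_sqrt (by linarith : 0 ≤ 1 - μ)] at hmix
  nlinarith [mul_le_mul_of_nonneg_right hμα (by linarith : 0 ≤ 1 - μ),
    mul_nonneg hμ0.le (by nlinarith : 0 ≤ 1 - μ - μ ^ 2)]

def planeSlice (k : ℕ) (i : Fin k) : ℝ × ℝ →ₗ[ℝ] ℂ × (Fin k → ℂ) :=
  (Complex.ofRealCLM.toLinearMap ∘ₗ LinearMap.fst ℝ ℝ ℝ).prod
    (LinearMap.single ℝ (fun _ => ℂ) i ∘ₗ Complex.ofRealCLM.toLinearMap ∘ₗ LinearMap.snd ℝ ℝ ℝ)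

lemma planeSlice_preimage_E2m (k : ℕ) (i : Fin k) (m : ℝ) :
    planeSlice k i ⁻¹' E2m k m = {p : ℝ × ℝ | |p.1| ^ (2 * m) + p.2 ^ 2 < 1} := by
  ext ⟨x, y⟩
  have hsum : ∑ j, ‖Pi.single (M := fun _ => ℂ) i (y : ℂ) j‖ ^ 2 = y ^ 2 := by
    simp_rw [Pi.apply_single (fun _ (z : ℂ) => ‖z‖ ^ 2) (by simp), Finset.sum_pi_single']
    simp
  simp [planeSlice, E2m, hsum]

/-- For every integer `n ≥ 2` (here `n = k + 1` with `k ≥ 1`) and every real `m` with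
`0 < m < 1/2`, the pseudo-egg `E_{2m}` is not a convex subset of `ℂ^n`. -/
theorem statement0 (k : ℕ) (hk : 1 ≤ k) (m : ℝ) (hm0 : 0 < m) (hm : m < 1 / 2) :
    ¬ Convex ℝ (E2m k m) := fun hconv => by
  have hslice := hconv.linear_preimage (planeSlice k ⟨0, hk⟩)
  rw [planeSlice_preimage_E2m] at hslice
  exact not_convex_setOf_abs_rpow_add_sq_lt_one (by linarith) (by linarith) hslice
end
end

section
/- Let p = (p_1, p̂) ∈ E_{2m} with p_1 ≠ 0, and let Ψ be an automorphism of the unit ball 𝔹^{n−1} ⊂ ℂ^{n−1} with Ψ(p̂) = 0. Then the map Φ(z_1, ẑ) = ( (|p_1|/p_1) · (1 − |p̂|²)^{1/(2m)} / (1 − ⟨ẑ, p̂⟩)^{1/m} · z_1 , Ψ(ẑ) ), where ⟨ẑ, p̂⟩ = z_2 p̄_2 + … + z_n p̄_n, |p̂|² = |p_2|² + … + |p_n|², and the complex power (1 − ⟨ẑ, p̂⟩)^{1/m} is taken with the principal branch (well defined since Re(1 − ⟨ẑ, p̂⟩) > 0 on E_{2m}), is an automorphism of E_{2m}, and Φ(p)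 = ( |p_1| (1 − |p̂|²)^{−1/(2m)}, 0, …, 0 ). -/
noncomputable section

/-- The open Euclidean unit ball `𝔹^k ⊆ ℂ^k`. -/
def euclBall (k : ℕ) : Set (Fin k → ℂ) :=
  {w | ∑ j, ‖w j‖ ^ 2 < 1}

/-- An automorphism of a domain `D`: a holomorphic bijection of `D` onto itself
whose inverse is holomorphic. -/
def IsAutomorphismOf {X : Type*} [NormedAddCommGroup X] [NormedSpace ℂ X]
    (D : Set X) (F : X → X) : Prop :=
  DifferentiableOn ℂ F D ∧ Set.BijOn F D D ∧
    ∃ G : X → X, DifferentiableOn ℂ G D ∧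
      (∀ z ∈ D, G (F z) = z) ∧ (∀ w ∈ D, F (G w) = w)

/-- The map `Φ(z₁, ẑ) = ( (|p₁|/p₁) (1−|p̂|²)^{1/(2m)} (1−⟨ẑ,p̂⟩)^{−1/m} z₁ , Ψ(ẑ) )`,
where `⟨ẑ,p̂⟩ = ∑ z_j p̄_j` and the complex power is the principal branch. -/
def Phi (k : ℕ) (m : ℝ) (p : ℂ × (Fin k → ℂ)) (Ψ : (Fin k → ℂ) → (Fin k → ℂ))
    (z : ℂ × (Fin k → ℂ)) : ℂ × (Fin k → ℂ) :=
  (((‖p.1‖ : ℂ) / p.1) *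
      (((1 - ∑ j, ‖p.2 j‖ ^ 2) ^ (1 / (2 * m)) : ℝ) : ℂ) /
      ((1 - ∑ j, z.2 j * (starRingEnd ℂ) (p.2 j)) ^ ((1 / m : ℝ) : ℂ)) * z.1,
    Ψ z.2)

open Set Metric
open scoped InnerProductSpace ComplexConjugate

/-!
Write `Φ(z) = (c(ẑ) z₁, Ψ(ẑ))`. With `c` holomorphic and zero-free on the ball, a map of this
shape is an automorphism of `E_{2m}` as soon as `Φ z ∈ E_{2m} ↔ z ∈ E_{2m}`, the inverse being
`w ↦ (w₁ / c(Ψ⁻¹ ŵ), Ψ⁻¹ ŵ)`.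

The heart of the matter is the identity
`(1 - |Ψ ẑ|²) |1 - ⟨ẑ, p̂⟩|² = (1 - |p̂|²) (1 - |ẑ|²)` on the ball. If `φ` is the Möbius involution
of the ball exchanging `0` and `p̂`, then `Ψ ∘ φ` is an automorphism fixing `0`, hence preserves
the norm by the Schwarz lemma applied to it and to its inverse; so `|Ψ ẑ| = |φ ẑ|`, and for `φ`
the identity is a computation. As `|c(ẑ)|^{2m} = (1 - |p̂|²) / |1 - ⟨ẑ, p̂⟩|²`, it turns the
condition `|Φ₁ z|^{2m} + |Ψ ẑ|² < 1` into `|z₁|^{2m} + |ẑ|² < 1`.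
-/

section Automorphism

variable {X Y : Type*} [NormedAddCommGroup X] [NormedSpace ℂ X]
  [NormedAddCommGroup Y] [NormedSpace ℂ Y] {D : Set X} {F G : X → X}

theorem isAutomorphismOf_iff :
    IsAutomorphismOf D F ↔ DifferentiableOn ℂ F D ∧ MapsTo F D D ∧
      ∃ G : X → X, DifferentiableOn ℂ G D ∧ MapsTo G D D ∧ InvOn G F D D := by
  constructor
  · rintro ⟨hF, hbij, G, hG, hGF, hFG⟩
    exact ⟨hF, hbij.mapsTo, G, hG, LeftInvOn.mapsTo hGF hbij.surjOn, hGF, hFG⟩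
  · rintro ⟨hF, hFD, G, hG, hGD, hinv⟩
    exact ⟨hF, hinv.bijOn hFD hGD, G, hG, hinv.1, hinv.2⟩

theorem IsAutomorphismOf.comp (hF : IsAutomorphismOf D F) (hG : IsAutomorphismOf D G) :
    IsAutomorphismOf D (F ∘ G) := by
  obtain ⟨hFd, hFD, F', hF'd, hF'D, hFinv⟩ := isAutomorphismOf_iff.mp hF
  obtain ⟨hGd, hGD, G', hG'd, hG'D, hGinv⟩ := isAutomorphismOf_iff.mp hG
  exact isAutomorphismOf_iff.mpr ⟨hFd.comp hGd hGD, hFD.comp hGD, G' ∘ F',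
    hG'd.comp hF'd hF'D, hG'D.comp hF'D, hGinv.comp hFinv hGD hF'D⟩

theorem IsAutomorphismOf.conj (e : Y ≃L[ℂ] X) (hF : IsAutomorphismOf D F) :
    IsAutomorphismOf (e ⁻¹' D) (e.symm ∘ F ∘ e) := by
  obtain ⟨hFd, hFD, G, hGd, hGD, hinv⟩ := isAutomorphismOf_iff.mp hF
  have he : MapsTo e (e ⁻¹' D) D := fun _ h ↦ h
  have hconj : ∀ {H : X → X}, MapsTo H D D → MapsTo (e.symm ∘ H ∘ e) (e ⁻¹' D) (e ⁻¹' D) :=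
    fun hH x hx ↦ by simpa using hH hx
  refine isAutomorphismOf_iff.mpr ⟨?_, hconj hFD, e.symm ∘ G ∘ e, ?_, hconj hGD, ?_, ?_⟩
  · exact e.symm.differentiable.comp_differentiableOn (hFd.comp e.differentiableOn he)
  · exact e.symm.differentiable.comp_differentiableOn (hGd.comp e.differentiableOn he)
  · intro x hx; simp [hinv.1 hx]
  · intro x hx; simp [hinv.2 hx]

end Automorphism

theorem sq_ofReal_sqrt_one_sub_sq {t : ℝ} (ht : t ^ 2 ≤ 1) :
    ((√(1 - t ^ 2) : ℝ) : ℂ) ^ 2 = 1 - (t : ℂ) ^ 2 := by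
  rw [← Complex.ofReal_pow, Real.sq_sqrt (by linarith)]
  push_cast; rfl

section Mobius

variable {E : Type*} [NormedAddCommGroup E] [InnerProductSpace ℂ E] {a z : E}

/- Rudin's involution `φ_a z = (a - P_a z - s_a Q_a z) / (1 - ⟨z, a⟩)` of the unit ball, where
`P_a` is the orthogonal projection onto `ℂ a`, `Q_a = 1 - P_a` and `s_a = √(1 - ‖a‖²)`; Mathlib's
`⟪a, z⟫_ℂ` is conjugate-linear in `a`, so it is the paper's `⟨z, a⟩`. At `a = 0` the division by
`‖a‖² = 0` makes it `-z`, still an involution. -/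
def ballMobius (a z : E) : E :=
  (1 - ⟪a, z⟫_ℂ)⁻¹ • ((1 - (1 - (√(1 - ‖a‖ ^ 2) : ℂ)) * ⟪a, z⟫_ℂ / (‖a‖ : ℂ) ^ 2) • a
    - (√(1 - ‖a‖ ^ 2) : ℂ) • z)

-- `inner_self_eq_norm_sq_to_K` with the coercion written as `Complex.ofReal`, the form in which
-- `push_cast` and `ring` see it.
theorem inner_self_eq_ofReal_norm_sq (a : E) : ⟪a, a⟫_ℂ = (‖a‖ : ℂ) ^ 2 :=
  inner_self_eq_norm_sq_to_K a

theorem norm_inner_lt_one (ha : ‖a‖ < 1) (hz : ‖z‖ < 1) : ‖⟪a, z⟫_ℂ‖ < 1 :=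
  (norm_inner_le_norm a z).trans_lt <| by nlinarith [norm_nonneg a, norm_nonneg z]

theorem inner_ne_one (ha : ‖a‖ < 1) (hz : ‖z‖ < 1) : ⟪a, z⟫_ℂ ≠ 1 :=
  fun h ↦ (norm_inner_lt_one ha hz).ne (by rw [h, norm_one])

theorem one_sub_inner_ne_zero (ha : ‖a‖ < 1) (hz : ‖z‖ < 1) : 1 - ⟪a, z⟫_ℂ ≠ 0 :=
  sub_ne_zero.mpr (inner_ne_one ha hz).symm

theorem one_sub_inner_mem_slitPlane (ha : ‖a‖ < 1) (hz : ‖z‖ < 1) :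
    1 - ⟪a, z⟫_ℂ ∈ Complex.slitPlane := by
  refine Complex.mem_slitPlane_iff.mpr (Or.inl ?_)
  have := (Complex.re_le_norm _).trans_lt (norm_inner_lt_one ha hz)
  simp only [Complex.sub_re, Complex.one_re]
  linarith

theorem ballMobius_zero_left (z : E) : ballMobius 0 z = -z := by
  simp [ballMobius]

theorem ballMobius_zero_right (a : E) : ballMobius a 0 = a := by
  simp [ballMobius]

theorem one_sub_norm_sq_ballMobius_mul (ha : ‖a‖ ≤ 1) (hz : ⟪a, z⟫_ℂ ≠ 1) :
    (1 - ‖ballMobius a z‖ ^ 2) * ‖1 - ⟪a, z⟫_ℂ‖ ^ 2 = (1 - ‖a‖ ^ 2) * (1 - ‖z‖ ^ 2) := by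
  rcases eq_or_ne a 0 with rfl | ha0
  · simp [ballMobius_zero_left]
  set c := ⟪a, z⟫_ℂ
  set s : ℝ := √(1 - ‖a‖ ^ 2)
  set v := (1 - (1 - (s : ℂ)) * c / (‖a‖ : ℂ) ^ 2) • a - (s : ℂ) • z
  have hc : ‖1 - c‖ ≠ 0 := norm_ne_zero_iff.mpr (sub_ne_zero.mpr (Ne.symm hz))
  have hs : (s : ℂ) ^ 2 = 1 - (‖a‖ : ℂ) ^ 2 :=
    sq_ofReal_sqrt_one_sub_sq (by nlinarith [norm_nonneg a])
  have hA : (‖a‖ : ℂ) ≠ 0 := by simpa using ha0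
  have hnorm : (‖1 - c‖ : ℂ) ^ 2 = (1 - c) * (1 - conj c) := by
    rw [← Complex.mul_conj', map_sub, map_one]
  have hφ : ‖ballMobius a z‖ ^ 2 * ‖1 - c‖ ^ 2 = ‖v‖ ^ 2 := by
    rw [show ballMobius a z = (1 - c)⁻¹ • v from rfl, norm_smul, norm_inv]
    field_simp
  rw [sub_mul, one_mul, hφ]
  apply Complex.ofReal_injective
  push_cast
  have hv : (‖v‖ : ℂ) ^ 2 = ⟪v, v⟫_ℂ := (inner_self_eq_ofReal_norm_sq v).symm
  rw [hv, hnorm]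
  simp only [v, inner_sub_left, inner_sub_right, inner_smul_left, inner_smul_right,
    inner_self_eq_ofReal_norm_sq, ← inner_conj_symm z a, map_sub, map_mul, map_div₀, map_one,
    map_pow, Complex.conj_ofReal]
  field_simp
  linear_combination (c * conj c - (‖a‖ : ℂ) ^ 2 * (‖z‖ : ℂ) ^ 2) * hs

theorem inner_ballMobius (hz : ⟪a, z⟫_ℂ ≠ 1) :
    ⟪a, ballMobius a z⟫_ℂ = ((‖a‖ : ℂ) ^ 2 - ⟪a, z⟫_ℂ) / (1 - ⟪a, z⟫_ℂ) := by
  rcases eq_or_ne a 0 with rfl | ha0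
  · simp
  have hA : (‖a‖ : ℂ) ≠ 0 := by simpa using ha0
  have hc : 1 - ⟪a, z⟫_ℂ ≠ 0 := sub_ne_zero.mpr (Ne.symm hz)
  rw [ballMobius, inner_smul_right, inner_sub_right, inner_smul_right, inner_smul_right,
    inner_self_eq_ofReal_norm_sq]
  field_simp
  ring

theorem ballMobius_ballMobius (ha : ‖a‖ < 1) (hz : ⟪a, z⟫_ℂ ≠ 1) :
    ballMobius a (ballMobius a z) = z := by
  rcases eq_or_ne a 0 with rfl | ha0
  · simp [ballMobius_zero_left]
  have hA : (‖a‖ : ℂ) ≠ 0 := by simpa using ha0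
  have hc : 1 - ⟪a, z⟫_ℂ ≠ 0 := sub_ne_zero.mpr (Ne.symm hz)
  have hs := sq_ofReal_sqrt_one_sub_sq (by nlinarith [norm_nonneg a])
  have h1A : 1 - (‖a‖ : ℂ) ^ 2 ≠ 0 := by
    exact_mod_cast (show (0 : ℝ) < 1 - ‖a‖ ^ 2 by nlinarith [norm_nonneg a]).ne'
  rw [ballMobius, inner_ballMobius hz, ballMobius]
  match_scalars
  · field_simp
    rw [mul_zero, div_eq_zero_iff]
    exact Or.inl (by linear_combination (-⟪a, z⟫_ℂ) * hs)
  · field_simp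
    rw [show 1 - ⟪a, z⟫_ℂ - ((‖a‖ : ℂ) ^ 2 - ⟪a, z⟫_ℂ) = 1 - (‖a‖ : ℂ) ^ 2 by ring,
      div_eq_one_iff_eq h1A, hs]

theorem norm_ballMobius_lt_one (ha : ‖a‖ < 1) (hz : ‖z‖ < 1) : ‖ballMobius a z‖ < 1 := by
  have key := one_sub_norm_sq_ballMobius_mul ha.le (inner_ne_one ha hz)
  have hpos : 0 < (1 - ‖a‖ ^ 2) * (1 - ‖z‖ ^ 2) := by
    apply mul_pos <;> nlinarith [norm_nonneg a, norm_nonneg z]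
  rw [← key] at hpos
  have := pos_of_mul_pos_left hpos (by positivity)
  nlinarith [norm_nonneg (ballMobius a z)]

theorem differentiableOn_ballMobius (ha : ‖a‖ < 1) :
    DifferentiableOn ℂ (ballMobius a) (ball 0 1) := by
  have hinner : Differentiable ℂ (fun z : E ↦ ⟪a, z⟫_ℂ) := (innerSL ℂ a).differentiable
  refine DifferentiableOn.smul ?_ ?_
  · refine ((differentiable_const _).sub hinner).differentiableOn.inv fun z hz ↦ ?_
    exact one_sub_inner_ne_zero ha (mem_ball_zero_iff.mp hz)
  · fun_prop

theorem isAutomorphismOf_ballMobius (ha : ‖a‖ < 1) :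
    IsAutomorphismOf (ball (0 : E) 1) (ballMobius a) := by
  have hmaps : MapsTo (ballMobius a) (ball (0 : E) 1) (ball 0 1) := fun z hz ↦
    mem_ball_zero_iff.mpr (norm_ballMobius_lt_one ha (mem_ball_zero_iff.mp hz))
  have hinv : LeftInvOn (ballMobius a) (ballMobius a) (ball (0 : E) 1) := fun z hz ↦
    ballMobius_ballMobius ha (inner_ne_one ha (mem_ball_zero_iff.mp hz))
  exact isAutomorphismOf_iff.mpr ⟨differentiableOn_ballMobius ha, hmaps, ballMobius a,
    differentiableOn_ballMobius ha, hmaps, hinv, hinv⟩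

end Mobius

section BallAutomorphism

variable {E : Type*} [NormedAddCommGroup E] [InnerProductSpace ℂ E] {Ψ : E → E}

theorem IsAutomorphismOf.norm_apply_eq_of_map_zero (hΨ : IsAutomorphismOf (ball (0 : E) 1) Ψ)
    (hΨ0 : Ψ 0 = 0) {z : E} (hz : ‖z‖ < 1) : ‖Ψ z‖ = ‖z‖ := by
  obtain ⟨hΨd, hΨD, Ψ', hΨ'd, hΨ'D, hinv⟩ := isAutomorphismOf_iff.mp hΨ
  have hΨ'0 : Ψ' 0 = 0 := by
    simpa [hΨ0] using hinv.1 (mem_ball_self one_pos : (0 : E) ∈ ball 0 1)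
  have schwarz : ∀ {f : E → E}, DifferentiableOn ℂ f (ball 0 1) → MapsTo f (ball 0 1) (ball 0 1) →
      f 0 = 0 → ∀ {w : E}, ‖w‖ < 1 → ‖f w‖ ≤ ‖w‖ := fun hd hmaps h0 _ hw ↦
    Complex.norm_le_norm_of_mapsTo_ball hd (hmaps.mono_right ball_subset_closedBall) h0 hw
  have hz' : z ∈ ball (0 : E) 1 := mem_ball_zero_iff.mpr hz
  refine le_antisymm (schwarz hΨd hΨD hΨ0 hz) ?_
  calc ‖z‖ = ‖Ψ' (Ψ z)‖ := by rw [hinv.1 hz']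
    _ ≤ ‖Ψ z‖ := schwarz hΨ'd hΨ'D hΨ'0 (mem_ball_zero_iff.mp (hΨD hz'))

theorem IsAutomorphismOf.one_sub_norm_sq_mul (hΨ : IsAutomorphismOf (ball (0 : E) 1) Ψ)
    {a : E} (ha : ‖a‖ < 1) (hΨa : Ψ a = 0) {z : E} (hz : ‖z‖ < 1) :
    (1 - ‖Ψ z‖ ^ 2) * ‖1 - ⟪a, z⟫_ℂ‖ ^ 2 = (1 - ‖a‖ ^ 2) * (1 - ‖z‖ ^ 2) := by
  have hnorm : ‖Ψ z‖ = ‖ballMobius a z‖ := by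
    have h := (hΨ.comp (isAutomorphismOf_ballMobius ha)).norm_apply_eq_of_map_zero
      (by simp [ballMobius_zero_right, hΨa]) (norm_ballMobius_lt_one ha hz)
    rwa [Function.comp_apply, ballMobius_ballMobius ha (inner_ne_one ha hz)] at h
  rw [hnorm, one_sub_norm_sq_ballMobius_mul ha.le (inner_ne_one ha hz)]

end BallAutomorphism

section SkewProduct

variable {X : Type*} [NormedAddCommGroup X] [NormedSpace ℂ X] {B : Set X} {Ω : Set (ℂ × X)}
  {c : X → ℂ} {Ψ : X → X}

theorem IsAutomorphismOf.skewProduct (hΨ : IsAutomorphismOf B Ψ) (hc : DifferentiableOn ℂ c B)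
    (hc0 : ∀ x ∈ B, c x ≠ 0) (hΩB : ∀ z ∈ Ω, z.2 ∈ B)
    (hΩ : ∀ z : ℂ × X, z.2 ∈ B → ((c z.2 * z.1, Ψ z.2) ∈ Ω ↔ z ∈ Ω)) :
    IsAutomorphismOf Ω (fun z ↦ (c z.2 * z.1, Ψ z.2)) := by
  obtain ⟨hΨd, hΨB, Ψ', hΨ'd, hΨ'B, hinv⟩ := isAutomorphismOf_iff.mp hΨ
  have hsnd : MapsTo Prod.snd Ω B := hΩB
  have hΨ'snd : MapsTo (fun w : ℂ × X ↦ Ψ' w.2) Ω B := fun w hw ↦ hΨ'B (hΩB w hw)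
  have hΨ'snd_d : DifferentiableOn ℂ (fun w : ℂ × X ↦ Ψ' w.2) Ω :=
    hΨ'd.comp differentiableOn_snd hsnd
  have hright : ∀ w ∈ Ω, (c (Ψ' w.2) * ((c (Ψ' w.2))⁻¹ * w.1), Ψ (Ψ' w.2)) = w := fun w hw ↦ by
    rw [mul_inv_cancel_left₀ (hc0 _ (hΨ'snd hw)), hinv.2 (hΩB w hw)]
  refine isAutomorphismOf_iff.mpr ⟨?_, fun z hz ↦ (hΩ z (hΩB z hz)).mpr hz,
    fun w ↦ ((c (Ψ' w.2))⁻¹ * w.1, Ψ' w.2), ?_, fun w hw ↦ ?_, fun z hz ↦ ?_, hright⟩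
  · exact ((hc.comp differentiableOn_snd hsnd).mul differentiableOn_fst).prodMk
      (hΨd.comp differentiableOn_snd hsnd)
  · have hcΨ' : DifferentiableOn ℂ (fun w : ℂ × X ↦ c (Ψ' w.2)) Ω := hc.comp hΨ'snd_d hΨ'snd
    exact ((hcΨ'.fun_inv fun w hw ↦ hc0 _ (hΨ'snd hw)).mul differentiableOn_fst).prodMk hΨ'snd_d
  · exact (hΩ _ (hΨ'snd hw)).mp ((hright w hw).symm ▸ hw)
  · have hz2 : Ψ' (Ψ z.2) = z.2 := hinv.1 (hΩB z hz)
    simp only [hz2]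
    rw [inv_mul_cancel_left₀ (hc0 _ (hΩB z hz))]

end SkewProduct

section Euclidean

variable {k : ℕ}

theorem sum_norm_sq_eq_norm_toLp_sq (z : Fin k → ℂ) :
    ∑ j, ‖z j‖ ^ 2 = ‖(WithLp.toLp 2 z : EuclideanSpace ℂ (Fin k))‖ ^ 2 := by
  rw [EuclideanSpace.norm_sq_eq]

theorem sum_mul_conj_eq_inner_toLp (a z : Fin k → ℂ) :
    ∑ j, z j * conj (a j) =
      ⟪(WithLp.toLp 2 a : EuclideanSpace ℂ (Fin k)), WithLp.toLp 2 z⟫_ℂ := by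
  simp [PiLp.inner_apply]

theorem mem_euclBall_iff {z : Fin k → ℂ} :
    z ∈ euclBall k ↔ ‖(WithLp.toLp 2 z : EuclideanSpace ℂ (Fin k))‖ < 1 := by
  rw [euclBall, mem_ofPred_eq, sum_norm_sq_eq_norm_toLp_sq, sq_lt_one_iff₀ (norm_nonneg _)]

theorem one_sub_sum_norm_sq_pos {a : Fin k → ℂ} (ha : a ∈ euclBall k) :
    0 < 1 - ∑ j, ‖a j‖ ^ 2 :=
  sub_pos.mpr ha

theorem preimage_euclBall :
    EuclideanSpace.equiv (Fin k) ℂ ⁻¹' euclBall k = ball 0 1 := by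
  ext x
  rw [mem_preimage, mem_euclBall_iff, mem_ball_zero_iff]
  rfl

theorem IsAutomorphismOf.one_sub_sum_norm_sq_mul {Ψ : (Fin k → ℂ) → (Fin k → ℂ)}
    (hΨ : IsAutomorphismOf (euclBall k) Ψ) {a : Fin k → ℂ} (ha : a ∈ euclBall k) (hΨa : Ψ a = 0)
    {z : Fin k → ℂ} (hz : z ∈ euclBall k) :
    (1 - ∑ j, ‖Ψ z j‖ ^ 2) * ‖1 - ∑ j, z j * conj (a j)‖ ^ 2 =
      (1 - ∑ j, ‖a j‖ ^ 2) * (1 - ∑ j, ‖z j‖ ^ 2) := by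
  have hΨ' := hΨ.conj (EuclideanSpace.equiv (Fin k) ℂ)
  rw [preimage_euclBall] at hΨ'
  have hΨ'a : (EuclideanSpace.equiv (Fin k) ℂ).symm (Ψ a) = 0 := by rw [hΨa, map_zero]
  simp only [sum_norm_sq_eq_norm_toLp_sq, sum_mul_conj_eq_inner_toLp]
  exact hΨ'.one_sub_norm_sq_mul (mem_euclBall_iff.mp ha) hΨ'a (mem_euclBall_iff.mp hz)

end Euclidean

section Multiplier

variable {k : ℕ} {m : ℝ} {p : ℂ × (Fin k → ℂ)} {w : Fin k → ℂ}

def phiMultiplier (m : ℝ) (p : ℂ × (Fin k → ℂ)) (w : Fin k → ℂ) : ℂ :=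
  (‖p.1‖ : ℂ) / p.1 * (((1 - ∑ j, ‖p.2 j‖ ^ 2) ^ (1 / (2 * m)) : ℝ) : ℂ) /
    (1 - ∑ j, w j * conj (p.2 j)) ^ ((1 / m : ℝ) : ℂ)

theorem Phi_eq (Ψ : (Fin k → ℂ) → (Fin k → ℂ)) :
    Phi k m p Ψ = fun z ↦ (phiMultiplier m p z.2 * z.1, Ψ z.2) := rfl

theorem one_sub_sum_mul_conj_mem_slitPlane {a : Fin k → ℂ} (ha : a ∈ euclBall k)
    (hw : w ∈ euclBall k) : 1 - ∑ j, w j * conj (a j) ∈ Complex.slitPlane := by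
  rw [sum_mul_conj_eq_inner_toLp]
  exact one_sub_inner_mem_slitPlane (mem_euclBall_iff.mp ha) (mem_euclBall_iff.mp hw)

theorem cpow_ne_zero_of_mem_euclBall {a : Fin k → ℂ} (ha : a ∈ euclBall k)
    (hw : w ∈ euclBall k) (y : ℂ) : (1 - ∑ j, w j * conj (a j)) ^ y ≠ 0 :=
  Complex.cpow_ne_zero_iff.mpr
    (Or.inl (Complex.slitPlane_ne_zero (one_sub_sum_mul_conj_mem_slitPlane ha hw)))

theorem differentiableOn_phiMultiplier (hp : p.2 ∈ euclBall k) :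
    DifferentiableOn ℂ (phiMultiplier m p) (euclBall k) := by
  have hden : DifferentiableOn ℂ
      (fun w : Fin k → ℂ ↦ (1 - ∑ j, w j * conj (p.2 j)) ^ ((1 / m : ℝ) : ℂ)) (euclBall k) :=
    DifferentiableOn.cpow_const (by fun_prop) fun w hw ↦
      one_sub_sum_mul_conj_mem_slitPlane hp hw
  unfold phiMultiplier
  simp only [div_eq_mul_inv]
  exact (hden.inv fun w hw ↦ cpow_ne_zero_of_mem_euclBall hp hw _).const_mul _

theorem phiMultiplier_ne_zero (hp1 : p.1 ≠ 0) (hp : p.2 ∈ euclBall k) (hw : w ∈ euclBall k) :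
    phiMultiplier m p w ≠ 0 := by
  have hT : (((1 - ∑ j, ‖p.2 j‖ ^ 2) ^ (1 / (2 * m)) : ℝ) : ℂ) ≠ 0 :=
    Complex.ofReal_ne_zero.mpr (Real.rpow_pos_of_pos (one_sub_sum_norm_sq_pos hp) _).ne'
  have hnorm : (‖p.1‖ : ℂ) ≠ 0 := Complex.ofReal_ne_zero.mpr (norm_ne_zero_iff.mpr hp1)
  exact div_ne_zero (mul_ne_zero (div_ne_zero hnorm hp1) hT)
    (cpow_ne_zero_of_mem_euclBall hp hw _)

theorem norm_phiMultiplier_rpow (hm : m ≠ 0) (hp1 : p.1 ≠ 0) (hp : p.2 ∈ euclBall k) :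
    ‖phiMultiplier m p w‖ ^ (2 * m) =
      (1 - ∑ j, ‖p.2 j‖ ^ 2) / ‖1 - ∑ j, w j * conj (p.2 j)‖ ^ 2 := by
  have ht := (one_sub_sum_norm_sq_pos hp).le
  rw [phiMultiplier, norm_div, norm_mul, norm_div, Complex.norm_real, Complex.norm_real,
    norm_norm, div_self (norm_ne_zero_iff.mpr hp1), one_mul, Complex.norm_cpow_real,
    Real.norm_of_nonneg (Real.rpow_nonneg ht _),
    Real.div_rpow (Real.rpow_nonneg ht _) (Real.rpow_nonneg (norm_nonneg _) _),
    ← Real.rpow_mul ht, ← Real.rpow_mul (norm_nonneg _)]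
  congr 1
  · rw [one_div_mul_cancel (mul_ne_zero two_ne_zero hm), Real.rpow_one]
  · rw [show 1 / m * (2 * m) = (2 : ℕ) by field_simp; norm_num, Real.rpow_natCast]

end Multiplier

section Egg

variable {k : ℕ} {m : ℝ} {p z : ℂ × (Fin k → ℂ)} {Ψ : (Fin k → ℂ) → (Fin k → ℂ)}

theorem snd_mem_euclBall_of_mem_E2m (hz : z ∈ E2m k m) : z.2 ∈ euclBall k := by
  have := Real.rpow_nonneg (norm_nonneg z.1) (2 * m)
  simp only [E2m, euclBall, mem_ofPred_eq] at hz ⊢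
  linarith

theorem mk_phiMultiplier_mem_E2m_iff (hm : m ≠ 0) (hp1 : p.1 ≠ 0) (hp : p.2 ∈ euclBall k)
    (hΨ : IsAutomorphismOf (euclBall k) Ψ) (hΨp : Ψ p.2 = 0) (hz : z.2 ∈ euclBall k) :
    (phiMultiplier m p z.2 * z.1, Ψ z.2) ∈ E2m k m ↔ z ∈ E2m k m := by
  set t := 1 - ∑ j, ‖p.2 j‖ ^ 2
  set D := ‖1 - ∑ j, z.2 j * conj (p.2 j)‖ ^ 2
  have hD : 0 < D := by
    have := Complex.slitPlane_ne_zero (one_sub_sum_mul_conj_mem_slitPlane hp hz)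
    positivity
  have hpos : 0 < t / D := div_pos (one_sub_sum_norm_sq_pos hp) hD
  have hΨz : 1 - ∑ j, ‖Ψ z.2 j‖ ^ 2 = t / D * (1 - ∑ j, ‖z.2 j‖ ^ 2) := by
    rw [div_mul_eq_mul_div, eq_div_iff hD.ne']
    exact hΨ.one_sub_sum_norm_sq_mul hp hΨp hz
  have hfst : ‖phiMultiplier m p z.2 * z.1‖ ^ (2 * m) = t / D * ‖z.1‖ ^ (2 * m) := by
    rw [norm_mul, Real.mul_rpow (norm_nonneg _) (norm_nonneg _),
      norm_phiMultiplier_rpow hm hp1 hp]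
  simp only [E2m, mem_ofPred_eq]
  calc ‖phiMultiplier m p z.2 * z.1‖ ^ (2 * m) + ∑ j, ‖Ψ z.2 j‖ ^ 2 < 1
      ↔ t / D * ‖z.1‖ ^ (2 * m) < t / D * (1 - ∑ j, ‖z.2 j‖ ^ 2) := by
        rw [hfst, ← hΨz]; constructor <;> intro h <;> linarith
    _ ↔ ‖z.1‖ ^ (2 * m) + ∑ j, ‖z.2 j‖ ^ 2 < 1 := by
        rw [mul_lt_mul_iff_right₀ hpos]; constructor <;> intro h <;> linarith

theorem phiMultiplier_mul_self (hm : m ≠ 0) (hp1 : p.1 ≠ 0) (hp : p.2 ∈ euclBall k) :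
    phiMultiplier m p p.2 * p.1 =
      ((‖p.1‖ * (1 - ∑ j, ‖p.2 j‖ ^ 2) ^ (-(1 / (2 * m))) : ℝ) : ℂ) := by
  rw [phiMultiplier]
  set t := 1 - ∑ j, ‖p.2 j‖ ^ 2
  have ht := one_sub_sum_norm_sq_pos hp
  have hden : (1 - ∑ j, p.2 j * conj (p.2 j)) ^ ((1 / m : ℝ) : ℂ) = ((t ^ (1 / m) : ℝ) : ℂ) := by
    simp only [Complex.mul_conj']
    rw [Complex.ofReal_cpow ht.le]
    push_cast; rfl
  have hexp : t ^ (-(1 / (2 * m))) = t ^ (1 / (2 * m)) / t ^ (1 / m) := by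
    rw [← Real.rpow_sub ht]; congr 1; field_simp; ring
  have htm : ((t ^ (1 / m) : ℝ) : ℂ) ≠ 0 :=
    Complex.ofReal_ne_zero.mpr (Real.rpow_pos_of_pos ht _).ne'
  rw [hden, hexp]
  push_cast
  field_simp

end Egg

theorem statement3_general (k : ℕ) (m : ℝ) (hm0 : 0 < m)
    (p : ℂ × (Fin k → ℂ)) (hp : p ∈ E2m k m) (hp1 : p.1 ≠ 0)
    (Ψ : (Fin k → ℂ) → (Fin k → ℂ)) (hΨ : IsAutomorphismOf (euclBall k) Ψ)
    (hΨp : Ψ p.2 = 0) :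
    IsAutomorphismOf (E2m k m) (Phi k m p Ψ) ∧
      Phi k m p Ψ p =
        (((‖p.1‖ * (1 - ∑ j, ‖p.2 j‖ ^ 2) ^ (-(1 / (2 * m))) : ℝ) : ℂ),
          0) := by
  have hp2 := snd_mem_euclBall_of_mem_E2m hp
  rw [Phi_eq]
  refine ⟨hΨ.skewProduct (differentiableOn_phiMultiplier hp2)
    (fun w hw ↦ phiMultiplier_ne_zero hp1 hp2 hw) (fun z hz ↦ snd_mem_euclBall_of_mem_E2m hz)
    (fun z hz ↦ mk_phiMultiplier_mem_E2m_iff hm0.ne' hp1 hp2 hΨ hΨp hz), ?_⟩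
  exact Prod.ext (phiMultiplier_mul_self hm0.ne' hp1 hp2) hΨp

/-- For `p ∈ E_{2m}` with `p₁ ≠ 0` and `Ψ` an automorphism of `𝔹^{n-1}` with `Ψ(p̂) = 0`,
the map `Φ` is an automorphism of `E_{2m}` and `Φ(p) = (|p₁|(1−|p̂|²)^{−1/(2m)}, 0, …, 0)`. -/
theorem statement3 (k : ℕ) (hk : 1 ≤ k) (m : ℝ) (hm0 : 0 < m) (hm : m < 1 / 2)
    (p : ℂ × (Fin k → ℂ)) (hp : p ∈ E2m k m) (hp1 : p.1 ≠ 0)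
    (Ψ : (Fin k → ℂ) → (Fin k → ℂ)) (hΨ : IsAutomorphismOf (euclBall k) Ψ)
    (hΨp : Ψ p.2 = 0) :
    IsAutomorphismOf (E2m k m) (Phi k m p Ψ) ∧
      Phi k m p Ψ p =
        (((‖p.1‖ * (1 - ∑ j, ‖p.2 j‖ ^ 2) ^ (-(1 / (2 * m))) : ℝ) : ℂ),
          0) :=
  statement3_general k m hm0 p hp hp1 Ψ hΨ hΨp
end
end

section
/- For every v ∈ ℂ^n, the Kobayashi–Royden metric of E_{2m} at the origin equals the Minkowski gauge of E_{2m}: K_{E_{2m}}(0; v) = inf { t > 0 : v/t ∈ E_{2m} }. -/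
/-! Linear discs `ζ ↦ ζ • t⁻¹ • v` show that on the balanced domain `E_{2m}` the Kobayashi–Royden
metric at `0` is at most the Minkowski gauge. Conversely, let `φ : 𝔻 → E_{2m}` be holomorphic
with `φ 0 = 0`, put `ψ z = φ z / z` and let `ρ w = |w₁|^{2m} + |ŵ|²` (`eggFunction`). For
holomorphic `f` and `p > 0`, `|f|^p` is subharmonic (Jensen's formula bounds `log |f|` by its
circle averages, and `exp` is convex), so `ρ (φ' 0) = ρ (ψ 0)` is at most the average of `ρ ∘ ψ`
over the circle of radius `r`, hence at most `max (r^{-2m}) (r^{-2})`. Letting `r → 1` gives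
`ρ (φ' 0) ≤ 1`, i.e. the gauge of `φ' 0` is at most `1`: this Schwarz lemma is the reverse
inequality. -/

noncomputable section

/-- The Kobayashi–Royden infinitesimal metric of a domain `D`:
`K_D(z; v) = inf { λ > 0 : ∃ holomorphic φ : 𝔻 → D, φ(0) = z, λ φ'(0) = v }`. -/
def kobayashiRoyden {X : Type*} [NormedAddCommGroup X] [NormedSpace ℂ X]
    (D : Set X) (z v : X) : ℝ :=
  sInf {l : ℝ | 0 < l ∧ ∃ φ : ℂ → X, DifferentiableOn ℂ φ (Metric.ball (0 : ℂ) 1) ∧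
    Set.MapsTo φ (Metric.ball (0 : ℂ) 1) D ∧ φ 0 = z ∧ l • deriv φ 0 = v}

open Metric Set Filter Topology Real
open scoped Pointwise

section circleAverage

variable {f : ℂ → ℂ} {c : ℂ} {R : ℝ}

theorem exp_le_circleAverage_exp {g : ℂ → ℝ} {a : ℝ} (hg : CircleIntegrable g c R)
    (hexp : CircleIntegrable (fun z => exp (g z)) c R) (ha : a ≤ circleAverage g c R) :
    exp a ≤ circleAverage (fun z => exp (g z)) c R := by
  have htangent (z : ℂ) : exp a * (1 - a) + exp a • g z ≤ exp (g z) := by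
    calc exp a * (1 - a) + exp a • g z = exp a * (1 + (g z - a)) := by rw [smul_eq_mul]; ring
      _ ≤ exp a * exp (g z - a) := by gcongr; linarith [add_one_le_exp (g z - a)]
      _ = exp (g z) := by rw [← exp_add]; ring_nf
  calc exp a ≤ exp a * (1 + (circleAverage g c R - a)) :=
        le_mul_of_one_le_right (exp_pos a).le (by linarith)
    _ = circleAverage (fun z => exp a * (1 - a) + exp a • g z) c R := by
        rw [circleAverage_fun_add (circleIntegrable_const _ _ _) hg.const_fun_smul,
          circleAverage_const, circleAverage_fun_smul, smul_eq_mul]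
        ring
    _ ≤ circleAverage (fun z => exp (g z)) c R :=
        circleAverage_mono (by fun_prop) hexp fun z _ => htangent z

theorem AnalyticOnNhd.log_norm_le_circleAverage (hR : R ≠ 0)
    (hf : AnalyticOnNhd ℂ f (closedBall c |R|)) (hc : f c ≠ 0) :
    Real.log ‖f c‖ ≤ circleAverage (Real.log ‖f ·‖) c R := by
  rw [hf.circleAverage_log_norm hR hc, le_add_iff_nonneg_left]
  refine finsum_nonneg fun u => ?_
  by_cases hu : u ∈ closedBall c |R|
  · rcases eq_or_ne u c with rfl | huc
    · simp
    refine mul_nonneg (mod_cast MeromorphicOn.AnalyticOnNhd.divisor_nonneg hf u) ?_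
    rw [← Real.log_abs, abs_mul, abs_inv, abs_norm, ← div_eq_mul_inv]
    refine log_nonneg ((one_le_div (norm_pos_iff.2 (sub_ne_zero.2 huc.symm))).2 ?_)
    simpa [dist_eq_norm'] using hu
  · simp [hu]

theorem AnalyticOnNhd.norm_rpow_le_circleAverage {p : ℝ} (hp : 0 < p)
    (hf : AnalyticOnNhd ℂ f (closedBall c |R|)) :
    ‖f c‖ ^ p ≤ circleAverage (‖f ·‖ ^ p) c R := by
  rcases eq_or_ne R 0 with rfl | hR
  · simp
  rcases eq_or_ne (f c) 0 with hc | hc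
  · rw [hc, norm_zero, zero_rpow hp.ne']
    exact circleAverage_nonneg_of_nonneg fun z _ => by positivity
  have hsphere : sphere c |R| ⊆ closedBall c |R| := sphere_subset_closedBall
  have hlog : CircleIntegrable (Real.log ‖f ·‖) c R :=
    (hf.mono hsphere).meromorphicOn.circleIntegrable_log_norm
  have hnonzero : ∀ᶠ z in codiscreteWithin (sphere c |R|), f z ≠ 0 :=
    codiscreteWithin_mono hsphere (hf.preimage_zero_mem_codiscreteWithin hc (by simp)
      ((convex_closedBall c |R|).isConnected (by simp)))
  have hexp : (fun z => exp (p • Real.log ‖f z‖)) =ᶠ[codiscreteWithin (sphere c |R|)]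
      (‖f ·‖ ^ p) := by
    filter_upwards [hnonzero] with z hz
    rw [rpow_def_of_pos (norm_pos_iff.2 hz), smul_eq_mul, mul_comm]
  have hpow : CircleIntegrable (‖f ·‖ ^ p) c R :=
    ContinuousOn.circleIntegrable'
      ((hf.continuousOn.mono hsphere).norm.rpow_const fun _ _ => Or.inr hp.le)
  calc ‖f c‖ ^ p = exp (p • Real.log ‖f c‖) := by
        rw [rpow_def_of_pos (norm_pos_iff.2 hc), smul_eq_mul, mul_comm]
    _ ≤ circleAverage (fun z => exp (p • Real.log ‖f z‖)) c R := by
        refine exp_le_circleAverage_exp hlog.const_fun_smul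
          (hpow.congr_codiscreteWithin hexp.symm) ?_
        rw [circleAverage_fun_smul]
        exact smul_le_smul_of_nonneg_left (hf.log_norm_le_circleAverage hR hc) hp.le
    _ = circleAverage (‖f ·‖ ^ p) c R := circleAverage_congr_codiscreteWithin hexp hR

end circleAverage

section eggFunction

variable {ι : Type*} [Fintype ι] {m : ℝ}

-- `E2m k m` is definitionally `{w | eggFunction m w < 1}`, which the lemmas below use silently.
def eggFunction (m : ℝ) (z : ℂ × (ι → ℂ)) : ℝ :=
  ‖z.1‖ ^ (2 * m) + ∑ j, ‖z.2 j‖ ^ 2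

theorem continuous_eggFunction (hm : 0 ≤ m) : Continuous (eggFunction (ι := ι) m) := by
  unfold eggFunction
  exact ((continuous_fst.norm).rpow_const fun _ => Or.inr (by positivity)).add (by fun_prop)

theorem eggFunction_smul_le {𝕜 : Type*} [NormedField 𝕜] [NormedSpace 𝕜 ℂ] (a : 𝕜)
    (w : ℂ × (ι → ℂ)) :
    eggFunction m (a • w) ≤ max (‖a‖ ^ (2 * m)) (‖a‖ ^ 2) * eggFunction m w := by
  calc eggFunction m (a • w) = ‖a‖ ^ (2 * m) * ‖w.1‖ ^ (2 * m) + ‖a‖ ^ 2 * ∑ j, ‖w.2 j‖ ^ 2 := by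
        simp only [eggFunction, Prod.smul_fst, Prod.smul_snd, Pi.smul_apply, norm_smul,
          mul_rpow (norm_nonneg _) (norm_nonneg _), mul_pow, Finset.mul_sum]
    _ ≤ max (‖a‖ ^ (2 * m)) (‖a‖ ^ 2) * ‖w.1‖ ^ (2 * m)
          + max (‖a‖ ^ (2 * m)) (‖a‖ ^ 2) * ∑ j, ‖w.2 j‖ ^ 2 := by
        gcongr
        exacts [le_max_left _ _, le_max_right _ _]
    _ = max (‖a‖ ^ (2 * m)) (‖a‖ ^ 2) * eggFunction m w := by rw [eggFunction]; ring

theorem eggFunction_smul_lt_one {𝕜 : Type*} [NormedField 𝕜] [NormedSpace 𝕜 ℂ] (hm : 0 < m)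
    {a : 𝕜} (ha : ‖a‖ < 1) {w : ℂ × (ι → ℂ)} (hw : eggFunction m w ≤ 1) :
    eggFunction m (a • w) < 1 := by
  have hmax : max (‖a‖ ^ (2 * m)) (‖a‖ ^ 2) < 1 :=
    max_lt (rpow_lt_one (norm_nonneg _) ha (by positivity))
      (pow_lt_one₀ (norm_nonneg _) ha two_ne_zero)
  calc eggFunction m (a • w) ≤ max (‖a‖ ^ (2 * m)) (‖a‖ ^ 2) * eggFunction m w :=
        eggFunction_smul_le a w
    _ ≤ max (‖a‖ ^ (2 * m)) (‖a‖ ^ 2) := mul_le_of_le_one_right (by positivity) hw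
    _ < 1 := hmax

theorem AnalyticOnNhd.eggFunction_le_circleAverage {ψ : ℂ → ℂ × (ι → ℂ)} {c : ℂ} {R : ℝ}
    (hm : 0 < m) (hψ : AnalyticOnNhd ℂ ψ (closedBall c |R|)) :
    eggFunction m (ψ c) ≤ circleAverage (fun z => eggFunction m (ψ z)) c R := by
  have hcont : ContinuousOn ψ (sphere c |R|) := hψ.continuousOn.mono sphere_subset_closedBall
  have hfst : AnalyticOnNhd ℂ (fun z => (ψ z).1) (closedBall c |R|) := fun z hz =>
    analyticAt_fst.comp (hψ z hz)
  have hsnd (j : ι) : AnalyticOnNhd ℂ (fun z => (ψ z).2 j) (closedBall c |R|) :=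
    fun z hz =>
      analyticAt_pi_iff (f := fun i z => (ψ z).2 i) |>.1 (analyticAt_snd.comp (hψ z hz)) j
  have hfstInt : CircleIntegrable (fun z => ‖(ψ z).1‖ ^ (2 * m)) c R :=
    ContinuousOn.circleIntegrable' (hcont.fst.norm.rpow_const fun _ _ => Or.inr (by positivity))
  have hsndInt (j : ι) : CircleIntegrable (fun z => ‖(ψ z).2 j‖ ^ 2) c R :=
    ContinuousOn.circleIntegrable' (by fun_prop)
  unfold eggFunction
  rw [circleAverage_fun_add hfstInt (CircleIntegrable.fun_sum _ fun j _ => hsndInt j),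
    circleAverage_fun_sum fun j _ => hsndInt j]
  gcongr with j
  · exact hfst.norm_rpow_le_circleAverage (by positivity)
  · simpa only [← rpow_two] using (hsnd j).norm_rpow_le_circleAverage two_pos

theorem eggFunction_deriv_zero_le_one (hm : 0 < m) {φ : ℂ → ℂ × (ι → ℂ)}
    (hφ : DifferentiableOn ℂ φ (ball 0 1))
    (hmaps : MapsTo φ (ball 0 1) {w | eggFunction m w < 1})
    (h0 : φ 0 = 0) : eggFunction m (deriv φ 0) ≤ 1 := by
  have hψ : AnalyticOnNhd ℂ (dslope φ 0) (ball 0 1) :=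
    ((Complex.differentiableOn_dslope (ball_mem_nhds 0 one_pos)).2 hφ).analyticOnNhd isOpen_ball
  have hbound : ∀ r ∈ Ioo (0 : ℝ) 1, eggFunction m (deriv φ 0) ≤ max (r⁻¹ ^ (2 * m)) (r⁻¹ ^ 2) := by
    rintro r ⟨hr0, hr1⟩
    have hclosedBall : closedBall (0 : ℂ) |r| ⊆ ball 0 1 :=
      closedBall_subset_ball (by rwa [abs_of_pos hr0])
    have hint : CircleIntegrable (fun z => eggFunction m (dslope φ 0 z)) 0 r :=
      ContinuousOn.circleIntegrable' ((continuous_eggFunction hm.le).comp_continuousOn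
        (hψ.continuousOn.mono (sphere_subset_closedBall.trans hclosedBall)))
    rw [← dslope_same φ 0]
    refine ((hψ.mono hclosedBall).eggFunction_le_circleAverage hm).trans
      (circleAverage_mono_on_of_le_circle hint fun z hz => ?_)
    have hz0 : z ≠ 0 := ne_of_mem_sphere hz (by positivity)
    have hzinv : ‖z⁻¹‖ = r⁻¹ := by simpa [abs_of_pos hr0] using hz
    rw [dslope_of_ne _ hz0, slope, h0, vsub_eq_sub, sub_zero, sub_zero]
    calc eggFunction m (z⁻¹ • φ z) ≤ max (‖z⁻¹‖ ^ (2 * m)) (‖z⁻¹‖ ^ 2) * eggFunction m (φ z) :=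
          eggFunction_smul_le _ _
      _ ≤ max (r⁻¹ ^ (2 * m)) (r⁻¹ ^ 2) := by
          rw [hzinv]
          exact mul_le_of_le_one_right (by positivity)
            (hmaps (hclosedBall (sphere_subset_closedBall hz))).le
  have hlim : Tendsto (fun r : ℝ => max (r⁻¹ ^ (2 * m)) (r⁻¹ ^ 2)) (𝓝[<] 1) (𝓝 1) := by
    have : ContinuousAt (fun r : ℝ => max (r⁻¹ ^ (2 * m)) (r⁻¹ ^ 2)) 1 := by
      fun_prop (disch := norm_num)
    simpa using this.tendsto.mono_left nhdsWithin_le_nhds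
  exact ge_of_tendsto hlim (eventually_of_mem (Ioo_mem_nhdsLT zero_lt_one) hbound)

theorem balanced_E2m {k : ℕ} (hm : 0 ≤ m) : Balanced ℂ (E2m k m) := by
  refine balanced_iff_smul_mem.2 fun a ha w hw => ?_
  have hmax : max (‖a‖ ^ (2 * m)) (‖a‖ ^ 2) ≤ 1 :=
    max_le (rpow_le_one (norm_nonneg _) ha (by positivity)) (pow_le_one₀ (norm_nonneg _) ha)
  exact (eggFunction_smul_le a w).trans_lt
    (mul_lt_one_of_nonneg_of_lt_one_right hmax (by unfold eggFunction; positivity) hw)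

theorem E2m_mem_nhds_zero {k : ℕ} (hm : 0 < m) : E2m k m ∈ 𝓝 0 :=
  (isOpen_lt (continuous_eggFunction hm.le) continuous_const).mem_nhds
    (by simp [eggFunction, zero_rpow (by positivity : 2 * m ≠ 0)])

theorem gauge_E2m_le_one {k : ℕ} (hm : 0 < m) {w : ℂ × (Fin k → ℂ)} (hw : eggFunction m w ≤ 1) :
    gauge (E2m k m) w ≤ 1 := by
  refine le_of_forall_gt_imp_ge_of_dense fun u hu => gauge_le_of_mem (by positivity) ?_
  rw [mem_smul_set_iff_inv_smul_mem₀ (by positivity)]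
  refine eggFunction_smul_lt_one hm ?_ hw
  rw [norm_inv, Real.norm_of_nonneg (by positivity)]
  exact inv_lt_one_of_one_lt₀ hu

end eggFunction

section kobayashiRoyden

variable {X : Type*} [NormedAddCommGroup X] [NormedSpace ℂ X] {D : Set X}

theorem kobayashiRoyden_zero_eq_gauge (hbal : Balanced ℂ D) (hD : D ∈ 𝓝 0)
    (hschwarz : ∀ φ : ℂ → X, DifferentiableOn ℂ φ (ball 0 1) → MapsTo φ (ball 0 1) D →
      φ 0 = 0 → gauge D (deriv φ 0) ≤ 1) (v : X) :
    kobayashiRoyden D 0 v = gauge D v := by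
  have habs : Absorbent ℝ D := absorbent_nhds_zero hD
  have hlinear {b : ℝ} (hb : 0 < b) (hv : v ∈ b • D) : b ∈ {l : ℝ | 0 < l ∧ ∃ φ : ℂ → X,
      DifferentiableOn ℂ φ (ball 0 1) ∧ MapsTo φ (ball 0 1) D ∧ φ 0 = 0 ∧ l • deriv φ 0 = v} := by
    rw [mem_smul_set_iff_inv_smul_mem₀ hb.ne'] at hv
    refine ⟨hb, fun ζ => ζ • b⁻¹ • v, by fun_prop, fun ζ hζ => hbal.smul_mem ?_ hv,
      zero_smul _ _, ?_⟩
    · simpa using (mem_ball_zero_iff.1 hζ).le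
    · rw [((hasDerivAt_id' (x := (0 : ℂ))).smul_const (b⁻¹ • v)).deriv, one_smul,
        smul_inv_smul₀ hb.ne']
  unfold kobayashiRoyden
  apply le_antisymm
  · refine le_of_forall_gt_imp_ge_of_dense fun a ha => ?_
    obtain ⟨b, hb, hba, hv⟩ := exists_lt_of_gauge_lt habs ha
    exact (csInf_le ⟨0, fun l hl => hl.1.le⟩ (hlinear hb hv)).trans hba.le
  · obtain ⟨b, hb, -, hv⟩ := exists_lt_of_gauge_lt habs (lt_add_one (gauge D v))
    refine le_csInf ⟨b, hlinear hb hv⟩ ?_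
    rintro l ⟨hl, φ, hφ, hmaps, h0, rfl⟩
    rw [gauge_smul_of_nonneg hl.le, smul_eq_mul]
    exact mul_le_of_le_one_right hl.le (hschwarz φ hφ hmaps h0)

end kobayashiRoyden

theorem statement5_general (k : ℕ) (m : ℝ) (hm0 : 0 < m)
    (v : ℂ × (Fin k → ℂ)) :
    kobayashiRoyden (E2m k m) 0 v = sInf {t : ℝ | 0 < t ∧ t⁻¹ • v ∈ E2m k m} := by
  have hschwarz (φ : ℂ → ℂ × (Fin k → ℂ)) (hφ : DifferentiableOn ℂ φ (ball 0 1))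
      (hmaps : MapsTo φ (ball 0 1) (E2m k m)) (h0 : φ 0 = 0) : gauge (E2m k m) (deriv φ 0) ≤ 1 :=
    gauge_E2m_le_one hm0 (eggFunction_deriv_zero_le_one hm0 hφ hmaps h0)
  rw [kobayashiRoyden_zero_eq_gauge (balanced_E2m hm0.le) (E2m_mem_nhds_zero hm0) hschwarz v,
    gauge_def']
  rfl

/-- The Kobayashi–Royden metric of `E_{2m}` at the origin equals the Minkowski gauge
of `E_{2m}`: `K_{E_{2m}}(0; v) = inf { t > 0 : v / t ∈ E_{2m} }`. -/
theorem statement5 (k : ℕ) (hk : 1 ≤ k) (m : ℝ) (hm0 : 0 < m) (hm : m < 1 / 2)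
    (v : ℂ × (Fin k → ℂ)) :
    kobayashiRoyden (E2m k m) 0 v = sInf {t : ℝ | 0 < t ∧ t⁻¹ • v ∈ E2m k m} :=
  statement5_general k m hm0 v
end
end

section
/- Let 0 < m < 1/2, 0 < p < 1 and 0 ≤ t < 1. Then the equation α^{2m} − t α^{2m−2} − (1−t) p^{2m} = 0 has exactly one solution α in the open interval (0,1). -/
/-- For `0 < m < 1/2`, `0 < p < 1` and `0 ≤ t < 1`, the equation
`α^{2m} − t α^{2m−2} − (1−t) p^{2m} = 0` (real powers) has exactly one solution `α`
in the open interval `(0,1)`. -/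
theorem statement9 (m p t : ℝ) (hm0 : 0 < m) (hm : m < 1 / 2)
    (hp0 : 0 < p) (hp1 : p < 1) (ht0 : 0 ≤ t) (ht1 : t < 1) :
    ∃! α : ℝ, α ∈ Set.Ioo (0 : ℝ) 1 ∧
      α ^ (2 * m) - t * α ^ (2 * m - 2) - (1 - t) * p ^ (2 * m) = 0 := by
  set f : ℝ → ℝ := fun α => α ^ (2 * m) - t * α ^ (2 * m - 2) - (1 - t) * p ^ (2 * m)
    with hf
  have h2m : 0 < 2 * m := by linarith
  have h2m2 : 2 * m - 2 < 0 := by linarith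
  -- strict monotonicity on (0, ∞)
  have hmono : ∀ x y : ℝ, 0 < x → x < y → f x < f y := by
    intro x y hx hxy
    have h1 : x ^ (2 * m) < y ^ (2 * m) := Real.rpow_lt_rpow hx.le hxy h2m
    have h2 : y ^ (2 * m - 2) < x ^ (2 * m - 2) :=
      Real.rpow_lt_rpow_of_neg hx hxy h2m2
    have h3 : t * y ^ (2 * m - 2) ≤ t * x ^ (2 * m - 2) :=
      mul_le_mul_of_nonneg_left h2.le ht0
    simp only [hf]
    linarith
  -- the constant c = (1-t) p^(2m) is positive
  have hc : 0 < (1 - t) * p ^ (2 * m) := by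
    have := Real.rpow_pos_of_pos hp0 (2 * m)
    nlinarith
  -- choose α₀ with f α₀ < 0
  set d : ℝ := ((1 - t) * p ^ (2 * m)) ^ (2 * m)⁻¹ with hd
  have hdpos : 0 < d := Real.rpow_pos_of_pos hc _
  set a : ℝ := min (1 / 2) (d / 2) with ha
  have ha0 : 0 < a := lt_min (by norm_num) (by linarith)
  have ha1 : a < 1 := lt_of_le_of_lt (min_le_left _ _) (by norm_num)
  have had : a < d := lt_of_le_of_lt (min_le_right _ _) (by linarith)
  have hfa : f a < 0 := by
    have h1 : a ^ (2 * m) < d ^ (2 * m) := Real.rpow_lt_rpow ha0.le had h2m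
    have h2 : d ^ (2 * m) = (1 - t) * p ^ (2 * m) :=
      Real.rpow_inv_rpow hc.le (by positivity)
    have h3 : 0 ≤ t * a ^ (2 * m - 2) := by positivity
    simp only [hf]
    linarith
  have hf1 : 0 < f 1 := by
    have hppow : p ^ (2 * m) < 1 := by
      have := Real.rpow_lt_one hp0.le hp1 h2m
      linarith
    simp only [hf, Real.one_rpow]
    nlinarith
  -- continuity on [a, 1]
  have hcont : ContinuousOn f (Set.Icc a 1) := by
    intro x hx
    have hx0 : 0 < x := lt_of_lt_of_le ha0 hx.1
    have c1 : ContinuousAt (fun y : ℝ => y ^ (2 * m)) x :=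
      Real.continuousAt_rpow_const x _ (Or.inl hx0.ne')
    have c2 : ContinuousAt (fun y : ℝ => y ^ (2 * m - 2)) x :=
      Real.continuousAt_rpow_const x _ (Or.inl hx0.ne')
    exact ((c1.sub ((continuousAt_const.mul c2))).sub continuousAt_const).continuousWithinAt
  obtain ⟨α, hαmem, hα⟩ := intermediate_value_Ioo ha1.le hcont ⟨hfa, hf1⟩
  refine ⟨α, ⟨⟨lt_trans ha0 hαmem.1, hαmem.2⟩, hα⟩, ?_⟩
  rintro β ⟨⟨hβ0, hβ1⟩, hβ⟩
  rcases lt_trichotomy β α with h | h | h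
  · exfalso
    have := hmono β α hβ0 h
    simp only [hf] at this
    simp only [hf] at hα
    linarith
  · exact h
  · exfalso
    have := hmono α β (lt_trans ha0 hαmem.1) h
    simp only [hf] at this
    simp only [hf] at hα
    linarith
end
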